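/- arXiv:math/0602156 — 5 statements merged into one kernel-verified Lean document; each statement's English description precedes it below -/
import Mathlib

section
/- Let G be a finite group, let K be a Carter subgroup of G, and let N be a normal subgroup of G. Assume that any two Carter subgroups of the subgroup KN are conjugate in KN. Then the image KN/N of K under the canonical projection G → G/N is a Carter subgroup of G/N. -/
/-- A Carter subgroup of a group `G` is a nilpotent self-normalizing subgroup. -/
def IsCarterSubgroup {G : Type*} [Group G] (K : Subgroup G) : Prop :=
  Group.IsNilpotent K ∧ Subgroup.normalizer (K : Set G) = K

/-!
Frattini argument. Put `H = K ⊔ N`; if `gN` normalizes `KN/N` then `g` normalizes `H`, so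
`K` and `gKg⁻¹` are Carter subgroups of `H`, hence `gKg⁻¹ = cKc⁻¹` for some `c ∈ H`. Then
`g⁻¹c` normalizes `K`, so it lies in `K ≤ H`, and `g ∈ H`, i.e. `gN ∈ KN/N`.
-/

open Subgroup

section

variable {G : Type*} [Group G]

theorem Subgroup.map_conj_mul (K : Subgroup G) (a b : G) :
    K.map (MulAut.conj (a * b)).toMonoidHom =
      (K.map (MulAut.conj b).toMonoidHom).map (MulAut.conj a).toMonoidHom := by
  rw [map_map]
  congr 1
  ext
  simp [mul_assoc]

theorem Subgroup.inv_mul_mem_normalizer_of_map_conj_eq {K : Subgroup G} {a b : G}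
    (h : K.map (MulAut.conj a).toMonoidHom = K.map (MulAut.conj b).toMonoidHom) :
    a⁻¹ * b ∈ normalizer (K : Set G) := by
  refine mem_normalizer_iff_map_conj_eq.mpr ?_
  change K.map (MulAut.conj (a⁻¹ * b)).toMonoidHom = K
  rw [map_conj_mul, ← h, ← map_conj_mul, inv_mul_cancel]
  ext
  simp

theorem Subgroup.map_subtype_map_conj_subgroupOf (K H : Subgroup G) (c : H) :
    ((K.subgroupOf H).map (MulAut.conj c).toMonoidHom).map H.subtype =
      (K ⊓ H).map (MulAut.conj (c : G)).toMonoidHom := by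
  rw [← subgroupOf_map_subtype, map_map, map_map]
  rfl

namespace IsCarterSubgroup

variable {K H : Subgroup G}

theorem map_conj (hK : IsCarterSubgroup K) (g : G) :
    IsCarterSubgroup (K.map (MulAut.conj g).toMonoidHom) :=
  ⟨have := hK.1; Group.nilpotent_of_mulEquiv ((MulAut.conj g).subgroupMap K),
    by rw [← map_equiv_normalizer_eq, hK.2]⟩

theorem subgroupOf (hK : IsCarterSubgroup K) (hKH : K ≤ H) :
    IsCarterSubgroup (K.subgroupOf H) :=
  ⟨have := hK.1; Group.nilpotent_of_mulEquiv (subgroupOfEquivOfLe hKH).symm,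
    by rw [← subgroupOf_normalizer_eq hKH, hK.2]⟩

theorem normalizer_le_of_conj (hK : IsCarterSubgroup K) (hKH : K ≤ H)
    (hconj : ∀ K₁ K₂ : Subgroup H, IsCarterSubgroup K₁ → IsCarterSubgroup K₂ →
      ∃ c : H, K₁.map (MulAut.conj c).toMonoidHom = K₂) :
    normalizer (H : Set G) ≤ H := by
  intro g hg
  have hKgH : K.map (MulAut.conj g).toMonoidHom ≤ H :=
    (mem_normalizer_iff_map_conj_eq.mp hg).le.trans' (map_mono hKH)
  obtain ⟨c, hc⟩ := hconj _ _ (hK.subgroupOf hKH) ((hK.map_conj g).subgroupOf hKgH)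
  have hcg : K.map (MulAut.conj (c : G)).toMonoidHom = K.map (MulAut.conj g).toMonoidHom := by
    have := congrArg (map H.subtype) hc
    rwa [map_subtype_map_conj_subgroupOf, subgroupOf_map_subtype, inf_of_le_left hKH,
      inf_of_le_left hKgH] at this
  have hgc : g⁻¹ * c ∈ K := hK.2 ▸ inv_mul_mem_normalizer_of_map_conj_eq hcg.symm
  simpa using H.mul_mem c.2 (H.inv_mem (hKH hgc))

theorem map_of_surjective {G' : Type*} [Group G'] (hK : IsCarterSubgroup K) {f : G →* G'}
    (hf : Function.Surjective f)
    (h : normalizer ((K ⊔ f.ker : Subgroup G) : Set G) ≤ K ⊔ f.ker) :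
    IsCarterSubgroup (K.map f) := by
  refine ⟨have := hK.1; Group.nilpotent_of_surjective _ (f.subgroupMap_surjective K),
    le_antisymm ?_ le_normalizer⟩
  rw [← map_comap_eq_self_of_surjective hf (normalizer _),
    comap_normalizer_eq_of_surjective _ hf, comap_map_eq]
  exact (map_mono h).trans (by rw [← comap_map_eq, map_comap_eq_self_of_surjective hf])

end IsCarterSubgroup

end

theorem carter_image_in_quotient_general {G : Type*} [Group G]
    (K N : Subgroup G) [N.Normal] (hK : IsCarterSubgroup K)
    (hconj : ∀ K₁ K₂ : Subgroup ↥(K ⊔ N), IsCarterSubgroup K₁ → IsCarterSubgroup K₂ →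
      ∃ g : ↥(K ⊔ N), K₁.map (MulAut.conj g).toMonoidHom = K₂) :
    IsCarterSubgroup (K.map (QuotientGroup.mk' N)) :=
  hK.map_of_surjective (QuotientGroup.mk'_surjective N) <| by
    rw [QuotientGroup.ker_mk']
    exact hK.normalizer_le_of_conj le_sup_left hconj

/-- If `K` is a Carter subgroup of `G`, `N ⊴ G`, and Carter subgroups of `KN` are
conjugate, then the image of `K` in `G/N` is a Carter subgroup of `G/N`. -/
theorem carter_image_in_quotient {G : Type*} [Group G] [Finite G]
    (K N : Subgroup G) [N.Normal] (hK : IsCarterSubgroup K)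
    (hconj : ∀ K₁ K₂ : Subgroup ↥(K ⊔ N), IsCarterSubgroup K₁ → IsCarterSubgroup K₂ →
      ∃ g : ↥(K ⊔ N), K₁.map (MulAut.conj g).toMonoidHom = K₂) :
    IsCarterSubgroup (K.map (QuotientGroup.mk' N)) :=
  carter_image_in_quotient_general K N hK hconj
end

section
/- Let G be a finite group, S a Sylow 2-subgroup of G, and x ∈ N_G(S) an element of odd order. Assume there exist normal subgroups G₁, …, G_k of G such that (G₁ ∩ … ∩ G_k) ∩ S ≤ Z(N_G(S)), and assume that for each i the image of x in G/G_i commutes with every element of the image of S in G/G_i. Then x centralizes S, i.e. x commutes with every element of S. -/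
/-!
The commutator `c = ⁅x, s⁆` lies in `S`, because `x` normalizes `S`, and in every `Gᵢ`,
because `x` and `s` commute modulo `Gᵢ`; hence `c` is central in `N_G(S)`, in particular it
commutes with `x`. Then `⁅xⁿ, s⁆ = cⁿ` for all `n`, so `c ^ orderOf x = 1`: the order of `c`
is both odd and a power of `2`, whence `c = 1`.
-/

open scoped commutatorElement

section

variable {G : Type*} [Group G]

theorem commutatorElement_pow_left_of_commute {a b : G} (h : Commute a ⁅a, b⁆) (n : ℕ) :
    ⁅a ^ n, b⁆ = ⁅a, b⁆ ^ n := by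
  induction n with
  | zero => simp
  | succ n ih =>
    rw [pow_succ', commutatorElement_mul_left_eq_conj_mul, ih, (h.pow_right n).eq,
      mul_inv_cancel_right, ← pow_succ]

theorem IsPGroup.eq_one_of_pow_eq_one {p : ℕ} {P : Subgroup G} (hP : IsPGroup p P) {g : G}
    (hg : g ∈ P) {n : ℕ} (hn : p.Coprime n) (hgn : g ^ n = 1) : g = 1 := by
  have hcop : (orderOf g).Coprime n := by
    simpa using hP.orderOf_coprime hn ⟨g, hg⟩
  exact orderOf_eq_one_iff.mp (hcop.eq_one_of_dvd (orderOf_dvd_of_pow_eq_one hgn))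

theorem Subgroup.commutatorElement_mem_of_mem_normalizer {H : Subgroup G} {a b : G}
    (ha : a ∈ normalizer (H : Set G)) (hb : b ∈ H) : ⁅a, b⁆ ∈ H :=
  H.mul_mem ((mem_normalizer_iff.mp ha b).mp hb) (H.inv_mem hb)

theorem QuotientGroup.commutatorElement_mem_of_commute_mk {N : Subgroup G} [N.Normal] {a b : G}
    (h : Commute (mk' N a) (mk' N b)) : ⁅a, b⁆ ∈ N := by
  rw [← QuotientGroup.eq_one_iff, ← mk'_apply, map_commutatorElement,
    commutatorElement_eq_one_iff_commute]
  exact h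

theorem IsPGroup.commute_of_commute_commutatorElement {p : ℕ} {P : Subgroup G}
    (hP : IsPGroup p P) {a b : G} (ha : a ∈ Subgroup.normalizer (P : Set G)) (hb : b ∈ P)
    (hcop : p.Coprime (orderOf a)) (hcomm : Commute a ⁅a, b⁆) : Commute a b := by
  have hpow : ⁅a, b⁆ ^ orderOf a = 1 := by
    rw [← commutatorElement_pow_left_of_commute hcomm, pow_orderOf_eq_one,
      commutatorElement_one_left]
  exact commutatorElement_eq_one_iff_commute.mp
    (hP.eq_one_of_pow_eq_one (P.commutatorElement_mem_of_mem_normalizer ha hb) hcop hpow)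

end

theorem centralizes_sylow_of_centralizes_quotients_general {G : Type*} [Group G]
    (S : Sylow 2 G) (x : G) (hx : x ∈ Subgroup.normalizer ((S : Subgroup G) : Set G))
    (hodd : Odd (orderOf x))
    (k : ℕ) (Gs : Fin k → Subgroup G) [∀ i, (Gs i).Normal]
    (hcent : ∀ y ∈ (⨅ i, Gs i) ⊓ (S : Subgroup G),
      ∀ n ∈ Subgroup.normalizer ((S : Subgroup G) : Set G), y * n = n * y)
    (hquot : ∀ i, ∀ s ∈ (S : Subgroup G),
      QuotientGroup.mk' (Gs i) x * QuotientGroup.mk' (Gs i) s =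
        QuotientGroup.mk' (Gs i) s * QuotientGroup.mk' (Gs i) x) :
    ∀ s ∈ (S : Subgroup G), x * s = s * x := by
  intro s hs
  have hmem : ⁅x, s⁆ ∈ (⨅ i, Gs i) ⊓ (S : Subgroup G) :=
    ⟨Subgroup.mem_iInf.mpr fun i ↦
        QuotientGroup.commutatorElement_mem_of_commute_mk (hquot i s hs),
      Subgroup.commutatorElement_mem_of_mem_normalizer hx hs⟩
  refine (IsPGroup.commute_of_commute_commutatorElement S.isPGroup' hx hs ?_ ?_).eq
  · exact Nat.coprime_two_left.mpr hodd
  · exact (hcent _ hmem x hx).symm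

/-- An odd-order element of `N_G(S)` centralizing `S` modulo each of a family of
normal subgroups whose common intersection with `S` is central in `N_G(S)`,
centralizes `S`. -/
theorem centralizes_sylow_of_centralizes_quotients {G : Type*} [Group G] [Finite G]
    (S : Sylow 2 G) (x : G) (hx : x ∈ Subgroup.normalizer ((S : Subgroup G) : Set G))
    (hodd : Odd (orderOf x))
    (k : ℕ) (Gs : Fin k → Subgroup G) [∀ i, (Gs i).Normal]
    (hcent : ∀ y ∈ (⨅ i, Gs i) ⊓ (S : Subgroup G),
      ∀ n ∈ Subgroup.normalizer ((S : Subgroup G) : Set G), y * n = n * y)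
    (hquot : ∀ i, ∀ s ∈ (S : Subgroup G),
      QuotientGroup.mk' (Gs i) x * QuotientGroup.mk' (Gs i) s =
        QuotientGroup.mk' (Gs i) s * QuotientGroup.mk' (Gs i) x) :
    ∀ s ∈ (S : Subgroup G), x * s = s * x :=
  centralizes_sylow_of_centralizes_quotients_general S x hx hodd k Gs hcent hquot
end

section
/- Let F be a finite field, n ≥ 2, and let s ∈ GL_n(F) be an element of odd prime order whose characteristic polynomial is squarefree over F. Then the centralizer C_{GL_n(F)}(s) is not self-normalizing: N_{GL_n(F)}(C_{GL_n(F)}(s)) ≠ C_{GL_n(F)}(s). -/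
/-!
A regular semisimple `s` has squarefree, hence separable, characteristic polynomial `c`, which is
then also its minimal polynomial: `F^n` is a cyclic `F[X]`-module, and any matrix with the same
characteristic polynomial is conjugate to `s`. It therefore suffices to find `t = p(s) ≠ s` with
`charpoly t = c`: a conjugator `g` with `g s g⁻¹ = t` maps `C(s)` onto `C(t) ⊇ C(s)`, so it
normalizes `C(s)` (the group is finite) without centralizing `s`. If `s ^ q ≠ s` (`q = |F|`),
take `t = s ^ q`. Otherwise `c ∣ X ^ q - X` splits with `n ≥ 2` distinct roots, and `p` is the
interpolation polynomial swapping two of them.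
-/

open Polynomial Module Matrix

namespace Module.End

variable {K V : Type*} [Field K] [AddCommGroup V] [Module K V] [FiniteDimensional K V]

theorem nonempty_aeval'_equiv_quotient_minpoly {f : End K V}
    (hf : (minpoly K f).natDegree = finrank K V) :
    Nonempty (AEval' f ≃ₗ[K[X]] K[X] ⧸ Ideal.span {minpoly K f}) := by
  obtain ⟨x, hx⟩ := exists_ker_toSpanSingleton_eq_annihilator K[X] (AEval' f)
  rw [← span_minpoly_eq_annihilator] at hx
  let ψ := (Ideal.span {minpoly K f}).liftQ (LinearMap.toSpanSingleton K[X] _ x) hx.ge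
  have hinj : Function.Injective ψ :=
    LinearMap.ker_eq_bot.mp (Submodule.ker_liftQ_eq_bot' _ _ hx.symm)
  have : FiniteDimensional K (K[X] ⧸ Ideal.span {minpoly K f}) :=
    (AdjoinRoot.powerBasis' (minpoly.monic (Algebra.IsIntegral.isIntegral f))).finite
  have hsurj : Function.Surjective (ψ.restrictScalars K) := by
    refine (LinearMap.injective_iff_surjective_of_finrank_eq_finrank ?_).mp hinj
    rw [finrank_quotient_span_eq_natDegree, hf, (AEval'.of f).finrank_eq]
  exact ⟨(LinearEquiv.ofBijective ψ ⟨hinj, hsurj⟩).symm⟩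

theorem isConj_of_minpoly_eq {f g : End K V}
    (hf : (minpoly K f).natDegree = finrank K V) (hfg : minpoly K f = minpoly K g) :
    IsConj f g := by
  obtain ⟨ef⟩ := nonempty_aeval'_equiv_quotient_minpoly hf
  obtain ⟨eg⟩ := nonempty_aeval'_equiv_quotient_minpoly (f := g) (hfg ▸ hf)
  rw [← hfg] at eg
  let E := (ef.trans eg.symm).restrictScalars K
  refine ⟨LinearMap.GeneralLinearGroup.ofLinearEquiv
    ((AEval'.of f).trans (E.trans (AEval'.of g).symm)), LinearMap.ext fun v => ?_⟩
  change (AEval'.of g).symm (E (AEval'.of f (f v))) = g ((AEval'.of g).symm (E (AEval'.of f v)))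
  rw [← AEval'.X_smul_of]
  exact congrArg (AEval'.of g).symm ((ef.trans eg.symm).map_smul X _) |>.trans
    (AEval'.of_symm_X_smul _ _)

end Module.End

namespace Matrix

variable {n K : Type*} [Fintype n] [DecidableEq n] [Field K]

theorem isConj_of_minpoly_eq {A B : Matrix n n K} (hA : (minpoly K A).natDegree = Fintype.card n)
    (hAB : minpoly K A = minpoly K B) : IsConj A B := by
  have h := Module.End.isConj_of_minpoly_eq (f := toLin' A) (g := toLin' B)
    (by rwa [minpoly_toLin', Module.finrank_fintype_fun_eq_card])
    (by rw [minpoly_toLin', minpoly_toLin', hAB])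
  have hinv (M : Matrix n n K) : LinearMap.toMatrixAlgEquiv' (toLin' M) = M :=
    LinearMap.toMatrixAlgEquiv'_toLinAlgEquiv' M
  let φ : Module.End K (n → K) →* Matrix n n K :=
    (LinearMap.toMatrixAlgEquiv' : _ ≃ₐ[K] Matrix n n K)
  simpa [φ, hinv] using φ.map_isConj h

/-- Over the splitting field every root of the characteristic polynomial is an eigenvalue, hence a
root of the minimal polynomial; separability turns this into divisibility. -/
theorem minpoly_eq_charpoly_of_separable {A : Matrix n n K} (hA : A.charpoly.Separable) :
    minpoly K A = A.charpoly := by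
  let E := A.charpoly.SplittingField
  let B := A.map (algebraMap K E)
  have hmap : minpoly E B ∣ (minpoly K A).map (algebraMap K E) := by
    refine minpoly.dvd E _ ?_
    rw [aeval_map_algebraMap, show B = (Algebra.ofId K E).mapMatrix A from rfl,
      aeval_algHom_apply, minpoly.aeval, map_zero]
  have hroots : (A.charpoly.map (algebraMap K E)).roots ≤
      ((minpoly K A).map (algebraMap K E)).roots := by
    refine (Multiset.le_iff_subset (nodup_roots hA.map)).2 fun r hr => ?_
    have hB : Module.End.HasEigenvalue (toLin' B) r := by
      rw [Module.End.hasEigenvalue_iff_isRoot_charpoly, charpoly_toLin', charpoly_map]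
      exact isRoot_of_mem_roots hr
    rw [Module.End.hasEigenvalue_iff_isRoot, minpoly_toLin'] at hB
    exact mem_roots'.2 ⟨map_ne_zero (minpoly.ne_zero (isIntegral A)),
      dvd_iff_isRoot.1 ((dvd_iff_isRoot.2 hB).trans hmap)⟩
  have hdvd : A.charpoly ∣ minpoly K A :=
    (map_dvd_map' (algebraMap K E)).1 <| (SplittingField.splits _).dvd_of_roots_le_roots
      (map_ne_zero A.charpoly_monic.ne_zero) hroots
  exact eq_of_monic_of_dvd_of_natDegree_le A.charpoly_monic (minpoly.monic (isIntegral A)) hdvd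
    (natDegree_le_of_dvd (minpoly_dvd_charpoly A) A.charpoly_monic.ne_zero)

theorem isConj_of_charpoly_eq_of_separable {A B : Matrix n n K} (hAB : A.charpoly = B.charpoly)
    (hA : A.charpoly.Separable) : IsConj A B :=
  isConj_of_minpoly_eq
    (by rw [minpoly_eq_charpoly_of_separable hA, charpoly_natDegree_eq_dim])
    (by rw [minpoly_eq_charpoly_of_separable hA, minpoly_eq_charpoly_of_separable (hAB ▸ hA),
      hAB])

theorem charpoly_aeval_eq_of_roots_subset_image {A : Matrix n n K} {p : K[X]}
    (hsplit : A.charpoly.Splits) (hsep : A.charpoly.Separable)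
    (hp : ∀ μ ∈ A.charpoly.roots, ∃ ν ∈ A.charpoly.roots, p.eval ν = μ) :
    (aeval A p).charpoly = A.charpoly := by
  have hroots : A.charpoly.roots ≤ (aeval A p).charpoly.roots := by
    refine (Multiset.le_iff_subset (nodup_roots hsep)).2 fun μ hμ => ?_
    obtain ⟨ν, hν, rfl⟩ := hp μ hμ
    have hν' : ν ∈ spectrum K A := mem_spectrum_iff_isRoot_charpoly.2 (isRoot_of_mem_roots hν)
    exact mem_roots'.2 ⟨(charpoly_monic _).ne_zero, mem_spectrum_iff_isRoot_charpoly.1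
      (spectrum.subset_polynomial_aeval A p ⟨ν, hν', rfl⟩)⟩
  exact eq_of_monic_of_dvd_of_natDegree_le A.charpoly_monic (charpoly_monic _)
    (hsplit.dvd_of_roots_le_roots A.charpoly_monic.ne_zero hroots)
    (by rw [charpoly_natDegree_eq_dim, charpoly_natDegree_eq_dim])

theorem exists_aeval_charpoly_eq_ne_of_splits {A : Matrix n n K}
    (hn : 2 ≤ Fintype.card n) (hsplit : A.charpoly.Splits) (hsep : A.charpoly.Separable) :
    ∃ p : K[X], (aeval A p).charpoly = A.charpoly ∧ aeval A p ≠ A := by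
  classical
  set T := A.charpoly.roots.toFinset
  have hT : 1 < T.card := by
    rw [Multiset.toFinset_card_of_nodup (nodup_roots hsep), (splits_iff_card_roots.1 hsplit),
      charpoly_natDegree_eq_dim]
    omega
  obtain ⟨l₁, hl₁, l₂, hl₂, hne⟩ := Finset.one_lt_card.1 hT
  let σ := Equiv.swap l₁ l₂
  have hσT : ∀ μ ∈ T, σ μ ∈ T := by
    intro μ hμ
    rcases eq_or_ne μ l₁ with rfl | h₁
    · simpa [σ] using hl₂
    rcases eq_or_ne μ l₂ with rfl | h₂
    · simpa [σ] using hl₁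
    · rwa [Equiv.swap_apply_of_ne_of_ne h₁ h₂]
  let p := Lagrange.interpolate T id σ
  have hp (μ : K) (hμ : μ ∈ T) : p.eval μ = σ μ :=
    Lagrange.eval_interpolate_at_node (v := id) σ (Set.injOn_id _) hμ
  refine ⟨p, charpoly_aeval_eq_of_roots_subset_image hsplit hsep fun μ hμ => ?_,
    fun hpA => hne ?_⟩
  · have hμ' : μ ∈ T := Multiset.mem_toFinset.2 hμ
    exact ⟨σ μ, Multiset.mem_toFinset.1 (hσT μ hμ'),
      by rw [hp _ (hσT μ hμ'), Equiv.swap_apply_self]⟩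
  · have hdvd : A.charpoly ∣ p - X := by
      rw [← minpoly_eq_charpoly_of_separable hsep]
      exact minpoly.dvd K A (by rw [map_sub, hpA, aeval_X, sub_self])
    have := eval_eq_zero_of_dvd_of_eval_eq_zero hdvd
      (isRoot_of_mem_roots (Multiset.mem_toFinset.1 hl₁))
    rw [eval_sub, hp l₁ hl₁, eval_X, Equiv.swap_apply_left, sub_eq_zero] at this
    exact this.symm

variable [Fintype K]

theorem splits_charpoly_of_pow_card_eq {A : Matrix n n K} (hsep : A.charpoly.Separable)
    (hA : A ^ Fintype.card K = A) : A.charpoly.Splits := by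
  have hsplit : (X ^ Fintype.card K - X : K[X]).Splits := by
    rw [splits_iff_card_roots, FiniteField.roots_X_pow_card_sub_X,
      FiniteField.X_pow_card_sub_X_natDegree_eq K Fintype.one_lt_card]
    rfl
  rw [← minpoly_eq_charpoly_of_separable hsep]
  exact hsplit.of_dvd (FiniteField.X_pow_card_sub_X_ne_zero K Fintype.one_lt_card)
    (minpoly.dvd K A (by simp [hA]))

theorem exists_aeval_charpoly_eq_ne {A : Matrix n n K} (hn : 2 ≤ Fintype.card n)
    (hsep : A.charpoly.Separable) :
    ∃ p : K[X], (aeval A p).charpoly = A.charpoly ∧ aeval A p ≠ A := by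
  by_cases hA : A ^ Fintype.card K = A
  · exact exists_aeval_charpoly_eq_ne_of_splits hn (splits_charpoly_of_pow_card_eq hsep hA) hsep
  · exact ⟨X ^ Fintype.card K, by simp [FiniteField.Matrix.charpoly_pow_card],
      by simpa using hA⟩

end Matrix

theorem Subgroup.normalizer_centralizer_ne_centralizer {G : Type*} [Group G] [Finite G] {s g : G}
    (hle : centralizer {s} ≤ centralizer {g * s * g⁻¹}) (hne : g * s * g⁻¹ ≠ s) :
    normalizer (centralizer {s} : Set G) ≠ centralizer {s} := by
  have hconj (h : G) :
      h ∈ centralizer {s} ↔ g * h * g⁻¹ ∈ centralizer {g * s * g⁻¹} := by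
    simp only [mem_centralizer_singleton_iff, ← MulAut.conj_apply, ← map_mul,
      EquivLike.apply_eq_iff_eq]
  have hcard : Nat.card (centralizer {g * s * g⁻¹}) ≤ Nat.card (centralizer {s}) :=
    Nat.card_le_card_of_injective
      (fun k => ⟨g⁻¹ * k * g, (hconj _).2 (by simpa [mul_assoc] using k.2)⟩)
      fun k₁ k₂ h => by simpa using congrArg Subtype.val h
  have heq := eq_of_le_of_card_ge hle hcard
  have hg : g ∈ normalizer (centralizer {s} : Set G) := fun h => by
    rw [SetLike.mem_coe, SetLike.mem_coe, hconj, ← heq]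
  intro hN
  rw [hN, mem_centralizer_singleton_iff] at hg
  exact hne (by rw [hg, mul_inv_cancel_right])

theorem centralizer_regular_semisimple_not_self_normalizing_general
    (F : Type) [Field F] [Fintype F] (n : ℕ) (hn : 2 ≤ n)
    (s : Matrix.GeneralLinearGroup (Fin n) F)
    (hsq : Squarefree (Matrix.charpoly ((s : Matrix (Fin n) (Fin n) F)))) :
    Subgroup.normalizer (Subgroup.centralizer {s} : Set (Matrix.GeneralLinearGroup (Fin n) F)) ≠ Subgroup.centralizer {s} := by
  have hsep := PerfectField.separable_iff_squarefree.2 hsq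
  obtain ⟨p, hp, hne⟩ := exists_aeval_charpoly_eq_ne (by simpa using hn) hsep
  obtain ⟨g, hg⟩ := isConj_of_charpoly_eq_of_separable hp.symm hsep
  have hgs : ((g * s * g⁻¹ : GL (Fin n) F) : Matrix (Fin n) (Fin n) F) =
      aeval (s : Matrix (Fin n) (Fin n) F) p := by
    rw [Units.val_mul, Units.val_mul, hg.eq, mul_assoc, Units.mul_inv, mul_one]
  refine Subgroup.normalizer_centralizer_ne_centralizer (g := g) (fun h hh => ?_) fun h => hne ?_
  · rw [Subgroup.mem_centralizer_singleton_iff] at hh ⊢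
    have hcomm : Commute (h : Matrix (Fin n) (Fin n) F) s := congrArg Units.val hh
    refine Units.ext ?_
    rw [Units.val_mul h, Units.val_mul _ h, hgs]
    rw [aeval_eq_smeval]
    exact (smeval_commute_left F p hcomm.symm).symm
  · rw [← hgs, h]

/-- The centralizer of a regular semisimple element of odd prime order in `GL_n(F)`
is not self-normalizing. -/
theorem centralizer_regular_semisimple_not_self_normalizing
    (F : Type) [Field F] [Fintype F] (n : ℕ) (hn : 2 ≤ n)
    (s : Matrix.GeneralLinearGroup (Fin n) F)
    (hprime : (orderOf s).Prime) (hodd : Odd (orderOf s))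
    (hsq : Squarefree (Matrix.charpoly ((s : Matrix (Fin n) (Fin n) F)))) :
    Subgroup.normalizer (Subgroup.centralizer {s} : Set (Matrix.GeneralLinearGroup (Fin n) F)) ≠ Subgroup.centralizer {s} :=
  centralizer_regular_semisimple_not_self_normalizing_general F n hn s hsq
end

section
/- Let W be the Coxeter group of type E₆ (the Weyl group W(E₆)). Then for every y ∈ W, the centralizer C_W(y) contains no Carter subgroup of order 3; that is, every subgroup X of C_W(y) with |X| = 3 satisfies N_{C_W(y)}(X) ≠ X. -/
/-!
Let `X` of prime order `p` be self-normalizing in `C = C_G(y)`. Every element of `C` centralizing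
`X` normalizes it, hence lies in `X`; in particular `y ∈ X`. A nontrivial element `z` of the centre
of a Sylow `p`-subgroup `Q ⊇ X` of `G` centralizes `y` and `X`, so `X = ⟨z⟩`. Then all of `Q`
centralizes `X ∋ y`, which forces `Q ≤ X`, so `p² ∤ |G|`. But `9` divides `|W(E₆)|`: the commuting
elements `s₀s₂` and `s₄s₅` of order `3` generate a copy of `C₃ × C₃`, as their action on the
27 lines of a cubic surface shows.

`W(E₆)` is finite by coset enumeration along the parabolic chain `A₁ ⊂ A₂ ⊂ A₃ ⊂ A₄ ⊂ D₅ ⊂ E₆`: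
by Deodhar's lemma, if `R` is the set of minimal representatives of `W_J \ W_J'` and `i ∈ J'`, each
`r sᵢ` (`r ∈ R`) is either in `R` or equal to `sⱼ r'` with `j ∈ J`, `r' ∈ R`. Each of these
identities is certified by the positions at which cancellations and braid relations are applied.
-/

open Subgroup in
theorem Subgroup.normalizer_ne_self_of_sq_dvd_card {G : Type*} [Group G] [Finite G] {p : ℕ}
    [Fact p.Prime] (hG : p ^ 2 ∣ Nat.card G) (y : G) (X : Subgroup (centralizer ({y} : Set G)))
    (hX : Nat.card X = p) : normalizer (X : Set (centralizer ({y} : Set G))) ≠ X := by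
  intro hN
  have mem_of_commute : ∀ c : centralizer {y}, (∀ x ∈ X, Commute (c : G) x) → c ∈ X :=
    fun c hc => hN ▸ centralizer_le_normalizer _ fun x hx => Subtype.ext (hc x hx).symm.eq
  have hyX : ⟨y, mem_centralizer_singleton_iff.2 rfl⟩ ∈ X :=
    mem_of_commute _ fun x _ => (mem_centralizer_singleton_iff.1 x.2).symm
  have hXp : IsPGroup p (X.map (centralizer {y}).subtype) :=
    IsPGroup.of_card (n := 1) (by rw [card_map_of_injective (subtype_injective _), hX, pow_one])
  obtain ⟨Q, hXQ⟩ := hXp.exists_le_sylow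
  have mem_Q : ∀ x ∈ X, (x : G) ∈ Q := fun x hx => hXQ ⟨x, hx, rfl⟩
  have hQ : p ^ 2 ≤ Nat.card Q := Nat.le_of_dvd Nat.card_pos (Q.pow_dvd_card_of_pow_dvd_card hG)
  have hp := (Fact.out : p.Prime).one_lt
  have : Nontrivial Q := Finite.one_lt_card_iff_nontrivial.1 (by nlinarith)
  have := Q.isPGroup'.center_nontrivial
  obtain ⟨z, hzZ, hz1⟩ := (center Q).exists_ne_one_of_nontrivial
  have hz : ∀ q ∈ Q, Commute (z : G) q := fun q hq =>
    congrArg Subtype.val (mem_center_iff.1 hzZ ⟨q, hq⟩).symm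
  have hzX : ⟨z, mem_centralizer_singleton_iff.2 (hz y (mem_Q _ hyX)).eq⟩ ∈ X :=
    mem_of_commute _ fun x hx => hz x (mem_Q x hx)
  have commute_Q : ∀ x ∈ X, ∀ q ∈ Q, Commute (x : G) q := by
    intro x hx q hq
    obtain ⟨k, hk⟩ := mem_zpowers_iff.1 <| mem_zpowers_of_prime_card hX (g := ⟨_, hzX⟩)
      (g' := ⟨x, hx⟩) fun h => hz1 (Subtype.ext (congrArg (fun x : X => (x : G)) h))
    rw [← congrArg (fun x : X => (x : G)) hk]
    simpa using (hz q hq).zpow_left k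
  have hQX : Q ≤ X.map (centralizer {y}).subtype := fun q hq =>
    ⟨⟨q, mem_centralizer_singleton_iff.2 (commute_Q _ hyX q hq).eq.symm⟩,
      mem_of_commute _ fun x hx => (commute_Q x hx q hq).symm, rfl⟩
  have := card_le_of_le hQX
  rw [card_map_of_injective (subtype_injective _), hX] at this
  nlinarith

theorem sq_dvd_card_of_commute {G : Type*} [Group G] [Finite G] {n : ℕ} [NeZero n] {a b : G}
    (hab : Commute a b) (ha : a ^ n = 1) (hb : b ^ n = 1)
    (hind : ∀ k < n, ∀ l < n, a ^ k * b ^ l = 1 → k = 0 ∧ l = 0) : n ^ 2 ∣ Nat.card G := by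
  let φ : Multiplicative (ZMod n × ZMod n) →* G :=
    MonoidHom.mk' (fun x => a ^ x.toAdd.1.val * b ^ x.toAdd.2.val) fun x y => by
      simp only [toAdd_mul, Prod.fst_add, Prod.snd_add, ZMod.val_add]
      rw [← pow_eq_pow_mod _ ha, ← pow_eq_pow_mod _ hb, pow_add, pow_add,
        (hab.pow_pow _ _).mul_mul_mul_comm]
  have hφ : Function.Injective φ := (injective_iff_map_eq_one φ).2 fun x hx => by
    obtain ⟨h1, h2⟩ := hind _ (ZMod.val_lt x.toAdd.1) _ (ZMod.val_lt x.toAdd.2) hx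
    exact toAdd_eq_zero.1 (Prod.ext (ZMod.val_eq_zero _ |>.1 h1) (ZMod.val_eq_zero _ |>.1 h2))
  calc n ^ 2 = Nat.card φ.range := by
        rw [← Nat.card_congr (MonoidHom.ofInjective hφ).toEquiv, Nat.card_eq_fintype_card]
        simp [sq]
    _ ∣ Nat.card G := φ.range.card_subgroup_dvd_card

theorem List.Forall₂.exists_of_mem_left {α β : Type*} {R : α → β → Prop} {l₁ : List α}
    {l₂ : List β} (h : List.Forall₂ R l₁ l₂) {a : α} (ha : a ∈ l₁) : ∃ b ∈ l₂, R a b := by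
  induction h with
  | nil => simp at ha
  | cons hab _ ih =>
    rcases List.mem_cons.1 ha with rfl | ha
    · exact ⟨_, List.mem_cons_self, hab⟩
    · obtain ⟨b, hb, hab⟩ := ih ha
      exact ⟨b, List.mem_cons_of_mem _ hb, hab⟩

namespace CoxeterMatrix

variable {B : Type*} [DecidableEq B] (M : CoxeterMatrix B)

def rewriteAt (w : List B) (p : ℕ) : Option (List B) :=
  match w.drop p with
  | v@(i :: j :: u) =>
    if i = j then some (w.take p ++ u)
    else if v.take (M i j) = CoxeterSystem.braidWord M i j then
      some (w.take p ++ CoxeterSystem.braidWord M j i ++ v.drop (M i j))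
    else if v.take (M i j) = CoxeterSystem.braidWord M j i then
      some (w.take p ++ CoxeterSystem.braidWord M i j ++ v.drop (M i j))
    else none
  | _ => none

def rewrite (w : List B) : List ℕ → Option (List B)
  | [] => some w
  | p :: ps => (M.rewriteAt w p).bind (rewrite · ps)

/-- `cert` rewrites the words `r ++ [i]` (`r ∈ R`, `i ∈ J'`, in this order) into words of `R`,
possibly preceded by a letter of `J`. -/
def IsCosetCertificate (J J' : List B) (R : List (List B)) (cert : List (List ℕ)) : Prop :=
  [] ∈ R ∧ List.Forall₂
    (fun w ps => ∃ v ∈ M.rewrite w ps, v ∈ R ∨ ∃ j ∈ J, j ∈ v.head? ∧ v.tail ∈ R)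
    (R.flatMap fun r => J'.map fun i => r ++ [i]) cert

instance (J J' : List B) (R : List (List B)) (cert : List (List ℕ)) :
    Decidable (M.IsCosetCertificate J J' R cert) :=
  inferInstanceAs (Decidable (_ ∧ List.Forall₂ _ _ _))

end CoxeterMatrix

namespace CoxeterSystem

open scoped Pointwise

variable {B W : Type*} [Group W] {M : CoxeterMatrix B} (cs : CoxeterSystem M W)

local prefix:100 "s" => cs.simple
local prefix:100 "π" => cs.wordProd

theorem wordProd_eq_of_rewriteAt [DecidableEq B] {w w' : List B} {p : ℕ}
    (h : M.rewriteAt w p = some w') : π w = π w' := by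
  have hw : π w = π (w.take p) * π (w.drop p) := by
    rw [← wordProd_append, List.take_append_drop]
  unfold CoxeterMatrix.rewriteAt at h
  split at h
  next i j u hd =>
    have hv : π (i :: j :: u) =
        π ((i :: j :: u).take (M i j)) * π ((i :: j :: u).drop (M i j)) := by
      rw [← wordProd_append, List.take_append_drop]
    rw [hw, hd]
    split_ifs at h with hij hb hb' <;> cases h <;> simp only [wordProd_append]
    · subst hij; rw [wordProd_cons, wordProd_cons, simple_mul_simple_cancel_left]
    · rw [hv, hb, wordProd_braidWord_eq, mul_assoc]
    · rw [hv, hb', ← wordProd_braidWord_eq, mul_assoc]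
  next => simp at h

theorem wordProd_eq_of_rewrite [DecidableEq B] {w w' : List B} {ps : List ℕ}
    (h : M.rewrite w ps = some w') : π w = π w' := by
  induction ps generalizing w with
  | nil => cases h; rfl
  | cons p ps ih =>
    obtain ⟨v, hv, h⟩ := Option.bind_eq_some_iff.1 h
    exact (cs.wordProd_eq_of_rewriteAt hv).trans (ih h)

theorem exists_wordProd_mul_simple_eq [DecidableEq B] {J J' : List B} {R : List (List B)}
    {cert : List (List ℕ)} (h : M.IsCosetCertificate J J' R cert) :
    ∀ r ∈ R, ∀ i ∈ J', ∃ r' ∈ R, π r * s i = π r' ∨ ∃ j ∈ J, π r * s i = s j * π r' := by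
  intro r hr i hi
  obtain ⟨ps, -, v, hrw, hv⟩ :=
    h.2.exists_of_mem_left (List.mem_flatMap.2 ⟨r, hr, List.mem_map.2 ⟨i, hi, rfl⟩⟩)
  rw [← wordProd_singleton, ← wordProd_append, cs.wordProd_eq_of_rewrite hrw]
  rcases hv with hv | ⟨j, hj, hvj, hv⟩
  · exact ⟨v, hv, .inl rfl⟩
  · refine ⟨v.tail, hv, .inr ⟨j, hj, ?_⟩⟩
    rw [← wordProd_cons, List.cons_head?_tail hvj]

theorem mul_simple_mem_mul_image_wordProd {S : Set W} {J J' : List B} {R : List (List B)}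
    (hS : ∀ t ∈ S, ∀ j ∈ J, t * s j ∈ S)
    (hR : ∀ r ∈ R, ∀ i ∈ J', ∃ r' ∈ R, π r * s i = π r' ∨ ∃ j ∈ J, π r * s i = s j * π r') :
    ∀ t ∈ S * cs.wordProd '' {r | r ∈ R}, ∀ i ∈ J', t * s i ∈ S * cs.wordProd '' {r | r ∈ R} := by
  rintro _ ⟨t, ht, _, ⟨r, hr, rfl⟩, rfl⟩ i hi
  obtain ⟨r', hr', h | ⟨j, hj, h⟩⟩ := hR r hr i hi
  · exact ⟨t, ht, _, ⟨r', hr', rfl⟩, by rw [mul_assoc, h]⟩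
  · exact ⟨t * s j, hS t ht j hj, _, ⟨r', hr', rfl⟩, by rw [mul_assoc, h]; exact mul_assoc _ _ _⟩

theorem exists_finite_of_isCosetCertificate [DecidableEq B] {J J' : List B} {R : List (List B)}
    {cert : List (List ℕ)} (hJ : ∃ S : Set W, S.Finite ∧ 1 ∈ S ∧ ∀ t ∈ S, ∀ j ∈ J, t * s j ∈ S)
    (hcert : M.IsCosetCertificate J J' R cert) :
    ∃ S : Set W, S.Finite ∧ 1 ∈ S ∧ ∀ t ∈ S, ∀ i ∈ J', t * s i ∈ S := by
  obtain ⟨S, hfin, h1, hS⟩ := hJ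
  exact ⟨S * cs.wordProd '' {r | r ∈ R}, hfin.mul ((List.finite_toSet R).image _),
    ⟨1, h1, 1, ⟨[], hcert.1, cs.wordProd_nil⟩, mul_one 1⟩,
    cs.mul_simple_mem_mul_image_wordProd hS (cs.exists_wordProd_mul_simple_eq hcert)⟩

theorem commute_simple_of_eq_two {i j : B} (h : M i j = 2) : Commute (s i) (s j) := by
  have := cs.wordProd_braidWord_eq i j
  rw [braidWord, braidWord, M.symmetric j i, h] at this
  simpa [alternatingWord, wordProd_cons, commute_iff_eq] using this

theorem eq_univ_of_mul_simple_mem {S : Set W} (h1 : 1 ∈ S) (hS : ∀ t ∈ S, ∀ i, t * s i ∈ S) :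
    S = Set.univ :=
  Set.eq_univ_of_forall fun w => cs.simple_induction_right w h1 fun w i hw => hS w hw i

end CoxeterSystem

namespace CoxeterMatrix.E₆

def cosetReps₁ : List (List (Fin 6)) :=
  [[], [5]]

def certificate₁ : List (List ℕ) :=
  [[], [0]]

def cosetReps₂ : List (List (Fin 6)) :=
  [[], [4], [4, 5]]

def certificate₂ : List (List ℕ) :=
  [[], [], [0], [], [0], [1]]

def cosetReps₃ : List (List (Fin 6)) :=
  [[], [3], [3, 4], [3, 4, 5]]

def certificate₃ : List (List ℕ) :=
  [[], [], [], [0], [], [0], [0], [1], [], [2, 0], [1, 0], [2]]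

def cosetReps₄ : List (List (Fin 6)) :=
  [[], [1], [1, 3], [1, 3, 4], [1, 3, 4, 5]]

def certificate₄ : List (List ℕ) :=
  [[], [], [], [], [0], [], [0], [0], [0], [1], [], [1, 0], [2, 0], [1, 0], [2], [], [3, 2, 0],
   [3, 1, 0], [2, 1, 0], [3]]

def cosetReps₅ : List (List (Fin 6)) :=
  [[], [2], [2, 3], [2, 3, 1], [2, 3, 4], [2, 3, 1, 4], [2, 3, 4, 5], [2, 3, 1, 4, 3],
   [2, 3, 1, 4, 5], [2, 3, 1, 4, 3, 2], [2, 3, 1, 4, 3, 5], [2, 3, 1, 4, 3, 2, 5],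
   [2, 3, 1, 4, 3, 5, 4], [2, 3, 1, 4, 3, 2, 5, 4], [2, 3, 1, 4, 3, 2, 5, 4, 3],
   [2, 3, 1, 4, 3, 2, 5, 4, 3, 1]]

def certificate₅ : List (List ℕ) :=
  [[], [], [], [], [], [0], [0], [], [0], [0], [], [0], [1], [], [1, 0], [2], [2, 0], [1, 0], [],
   [2, 1, 0], [2], [2, 0], [1, 0], [2], [], [2, 3], [3, 2, 0], [], [3], [], [3, 2], [3, 2, 0],
   [3, 1, 0], [2, 1, 0], [3], [2, 3, 1, 3, 0], [], [4], [3, 1, 0], [], [2, 3, 4], [4, 3, 2, 0], [4],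
   [3, 2, 1, 0], [4], [5, 2, 3, 1, 3, 0], [5], [4, 3, 2, 0], [5, 3, 1, 0], [], [5, 2, 3, 1, 3, 0],
   [5], [4, 5], [], [5], [6, 5, 2, 3, 1, 3, 0], [5, 6], [6, 4, 3, 2, 0], [], [6],
   [6, 5, 2, 3, 1, 3, 0], [6, 5], [4, 5, 3, 5, 2, 1, 0], [6], [5, 3, 1, 0],
   [7, 6, 5, 2, 3, 1, 3, 0], [5, 6, 7], [], [7], [6, 5, 3, 1, 0], [],
   [5, 6, 7, 4, 5, 7, 3, 5, 6, 2, 1, 0], [8], [7, 6, 4, 3, 2, 0], [8, 6, 5, 3, 1, 0], [9],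
   [9, 5, 6, 7, 4, 5, 7, 3, 5, 6, 2, 1, 0], [8, 7, 6, 5, 2, 3, 1, 3, 0], [9, 7, 6, 4, 3, 2, 0],
   [9, 8, 6, 5, 3, 1, 0]]

def cosetReps₆ : List (List (Fin 6)) :=
  [[], [0], [0, 2], [0, 2, 3], [0, 2, 3, 1], [0, 2, 3, 4], [0, 2, 3, 1, 4], [0, 2, 3, 4, 5],
   [0, 2, 3, 1, 4, 3], [0, 2, 3, 1, 4, 5], [0, 2, 3, 1, 4, 3, 2], [0, 2, 3, 1, 4, 3, 5],
   [0, 2, 3, 1, 4, 3, 2, 0], [0, 2, 3, 1, 4, 3, 2, 5], [0, 2, 3, 1, 4, 3, 5, 4],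
   [0, 2, 3, 1, 4, 3, 2, 0, 5], [0, 2, 3, 1, 4, 3, 2, 5, 4], [0, 2, 3, 1, 4, 3, 2, 0, 5, 4],
   [0, 2, 3, 1, 4, 3, 2, 5, 4, 3], [0, 2, 3, 1, 4, 3, 2, 0, 5, 4, 3],
   [0, 2, 3, 1, 4, 3, 2, 5, 4, 3, 1], [0, 2, 3, 1, 4, 3, 2, 0, 5, 4, 3, 1],
   [0, 2, 3, 1, 4, 3, 2, 0, 5, 4, 3, 2], [0, 2, 3, 1, 4, 3, 2, 0, 5, 4, 3, 1, 2],
   [0, 2, 3, 1, 4, 3, 2, 0, 5, 4, 3, 1, 2, 3], [0, 2, 3, 1, 4, 3, 2, 0, 5, 4, 3, 1, 2, 3, 4],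
   [0, 2, 3, 1, 4, 3, 2, 0, 5, 4, 3, 1, 2, 3, 4, 5]]

def certificate₆ : List (List ℕ) :=
  [[], [], [], [], [], [], [0], [0], [], [0], [0], [0], [0], [1, 0], [1], [], [1, 0], [1, 0],
   [2, 0], [], [1, 0], [2], [], [2, 1, 0], [3, 2, 0], [3], [3, 1, 0], [2, 1, 0], [], [3, 2, 1, 0],
   [3, 2, 0], [3], [3, 1, 0], [2, 1, 0], [3], [], [4, 3, 2, 0], [3, 4], [4, 3, 1, 0], [], [4], [],
   [4, 3, 2, 0], [4, 3], [4, 3, 1, 0], [4, 2, 1, 0], [3, 2, 1, 0], [4], [5, 4, 3, 2, 0],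
   [3, 4, 2, 4, 1, 0], [], [5], [4, 2, 1, 0], [], [5, 4, 3, 2, 0], [3, 4, 5], [5, 4, 3, 1, 0], [5],
   [4, 3, 2, 1, 0], [5], [], [6, 3, 4, 2, 4, 1, 0], [6], [5, 4, 3, 1, 0], [6, 4, 2, 1, 0], [],
   [6, 5, 4, 3, 2, 0], [6, 3, 4, 2, 4, 1, 0], [6], [5, 6], [], [6], [7], [7, 6, 3, 4, 2, 4, 1, 0],
   [6, 5, 4, 3, 2, 0], [7, 5, 4, 3, 1, 0], [7, 6, 4, 2, 1, 0], [], [7], [7, 6, 3, 4, 2, 4, 1, 0],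
   [6, 7], [7, 5, 4, 3, 1, 0], [], [7], [7, 6, 5, 4, 3, 2, 0], [7, 6, 3, 4, 2, 4, 1, 0], [7, 6],
   [5, 6, 4, 6, 3, 2, 1, 0], [7], [6, 4, 2, 1, 0], [7, 8], [8, 7, 6, 3, 4, 2, 4, 1, 0],
   [8, 6, 5, 4, 3, 2, 0], [8, 7, 5, 4, 3, 1, 0], [], [8], [8, 7], [8, 7, 6, 3, 4, 2, 4, 1, 0],
   [6, 7, 8], [], [8], [7, 6, 4, 2, 1, 0], [7, 8, 9], [9, 8, 7, 6, 3, 4, 2, 4, 1, 0],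
   [9, 8, 6, 5, 4, 3, 2, 0], [], [9], [8, 7, 6, 4, 2, 1, 0], [9, 8, 7], [],
   [6, 7, 8, 5, 6, 8, 4, 6, 7, 3, 2, 1, 0], [9], [8, 7, 5, 4, 3, 1, 0], [9, 7, 6, 4, 2, 1, 0],
   [7, 8, 9, 10], [], [], [10], [9, 8, 7, 5, 4, 3, 1, 0], [10, 8, 7, 6, 4, 2, 1, 0], [10, 9, 8, 7],
   [10], [10, 6, 7, 8, 5, 6, 8, 4, 6, 7, 3, 2, 1, 0], [9, 8, 7, 6, 3, 4, 2, 4, 1, 0],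
   [10, 8, 7, 5, 4, 3, 1, 0], [10, 9, 7, 6, 4, 2, 1, 0], [7, 8, 9, 10, 11], [11], [],
   [10, 9, 8, 7, 6, 3, 4, 2, 4, 1, 0], [11, 9, 8, 7, 5, 4, 3, 1, 0], [11, 10, 8, 7, 6, 4, 2, 1, 0],
   [7, 8, 9, 10, 6, 7, 8, 10, 5, 6, 8, 9, 4, 6, 7, 8, 3, 2, 1, 0], [11], [11],
   [10, 9, 8, 6, 5, 4, 3, 2, 0], [11, 9, 8, 7, 5, 4, 3, 1, 0], [11, 10, 8, 7, 6, 4, 2, 1, 0],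
   [11, 12, 7, 8, 9, 10, 12, 6, 7, 8, 10, 5, 6, 8, 9, 4, 6, 7, 8, 3, 2, 1, 0], [11, 12], [12], [],
   [12, 11, 9, 8, 7, 5, 4, 3, 1, 0], [12, 11, 10, 8, 7, 6, 4, 2, 1, 0],
   [13, 11, 12, 7, 8, 9, 10, 12, 6, 7, 8, 10, 5, 6, 8, 9, 4, 6, 7, 8, 3, 2, 1, 0],
   [11, 12, 10, 9, 8, 6, 5, 4, 3, 2, 12, 0], [12, 10, 9, 8, 7, 6, 3, 4, 2, 4, 1, 0], [13], [],
   [13, 12, 11, 10, 8, 7, 6, 4, 2, 1, 0],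
   [14, 13, 11, 12, 7, 8, 9, 10, 12, 6, 7, 8, 10, 5, 6, 8, 9, 4, 6, 7, 8, 3, 2, 1, 0],
   [11, 14, 12, 10, 9, 8, 6, 5, 4, 3, 2, 12, 0], [14, 12, 10, 9, 8, 7, 6, 3, 4, 2, 4, 1, 0],
   [13, 12, 11, 9, 8, 7, 5, 4, 3, 1, 0], [14], [],
   [15, 14, 13, 11, 12, 7, 8, 9, 10, 12, 6, 7, 8, 10, 5, 6, 8, 9, 4, 6, 7, 8, 3, 2, 1, 0],
   [11, 15, 14, 12, 10, 9, 8, 6, 5, 4, 3, 2, 12, 0], [15, 14, 12, 10, 9, 8, 7, 6, 3, 4, 2, 4, 1, 0],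
   [15, 13, 12, 11, 9, 8, 7, 5, 4, 3, 1, 0], [14, 13, 12, 11, 10, 8, 7, 6, 4, 2, 1, 0], [15]]

theorem isCosetCertificate₁ : E₆.IsCosetCertificate [] [5] cosetReps₁ certificate₁ := by
  decide +kernel

theorem isCosetCertificate₂ : E₆.IsCosetCertificate [5] [4, 5] cosetReps₂ certificate₂ := by
  decide +kernel

theorem isCosetCertificate₃ : E₆.IsCosetCertificate [4, 5] [3, 4, 5] cosetReps₃ certificate₃ := by
  decide +kernel

theorem isCosetCertificate₄ :
    E₆.IsCosetCertificate [3, 4, 5] [1, 3, 4, 5] cosetReps₄ certificate₄ := by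
  decide +kernel

theorem isCosetCertificate₅ :
    E₆.IsCosetCertificate [1, 3, 4, 5] [1, 2, 3, 4, 5] cosetReps₅ certificate₅ := by
  decide +kernel

theorem isCosetCertificate₆ :
    E₆.IsCosetCertificate [1, 2, 3, 4, 5] [0, 1, 2, 3, 4, 5] cosetReps₆ certificate₆ := by
  decide +kernel

instance : Finite E₆.Group := by
  let cs := E₆.toCoxeterSystem
  have h₀ : ∃ S : Set E₆.Group, S.Finite ∧ 1 ∈ S ∧ ∀ t ∈ S, ∀ j ∈ ([] : List (Fin 6)),
      t * cs.simple j ∈ S :=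
    ⟨{1}, Set.finite_singleton 1, rfl, by simp⟩
  have h₁ := cs.exists_finite_of_isCosetCertificate h₀ isCosetCertificate₁
  have h₂ := cs.exists_finite_of_isCosetCertificate h₁ isCosetCertificate₂
  have h₃ := cs.exists_finite_of_isCosetCertificate h₂ isCosetCertificate₃
  have h₄ := cs.exists_finite_of_isCosetCertificate h₃ isCosetCertificate₄
  have h₅ := cs.exists_finite_of_isCosetCertificate h₄ isCosetCertificate₅
  obtain ⟨S, hfin, h1, hS⟩ := cs.exists_finite_of_isCosetCertificate h₅ isCosetCertificate₆
  rw [← Set.finite_univ_iff, ← cs.eq_univ_of_mul_simple_mem h1 fun t ht i =>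
    hS t ht i (by fin_cases i <;> decide)]
  exact hfin

/-- The action of the simple reflections on the 27 lines of a cubic surface. -/
def linePerm : Fin 6 → Fin 27 → Fin 27 := ![
  ![1, 0, 2, 3, 4, 5, 6, 7, 8, 9, 12, 11, 10, 15, 14, 13,
    17, 16, 19, 18, 21, 20, 22, 23, 24, 25, 26],
  ![0, 1, 2, 4, 3, 6, 5, 9, 8, 7, 10, 11, 12, 13, 14, 15,
    16, 17, 20, 21, 18, 19, 23, 22, 24, 25, 26],
  ![0, 2, 1, 3, 4, 5, 6, 7, 10, 9, 8, 13, 12, 11, 16, 15,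
    14, 17, 18, 22, 20, 23, 19, 21, 24, 25, 26],
  ![0, 1, 3, 2, 4, 5, 8, 7, 6, 11, 10, 9, 12, 13, 14, 15,
    18, 19, 16, 17, 20, 21, 22, 24, 23, 25, 26],
  ![0, 1, 2, 5, 6, 3, 4, 7, 8, 9, 10, 14, 12, 16, 11, 17,
    13, 15, 18, 19, 20, 21, 22, 23, 25, 24, 26],
  ![0, 1, 2, 3, 4, 7, 9, 5, 11, 6, 13, 8, 15, 10, 14, 12,
    16, 17, 18, 19, 20, 21, 22, 23, 24, 26, 25]]

theorem linePerm_involutive (i : Fin 6) : Function.Involutive (linePerm i) := by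
  revert i
  unfold Function.Involutive
  decide +kernel

theorem isLiftable_linePerm : E₆.IsLiftable fun i => (linePerm_involutive i).toPerm := by
  unfold IsLiftable
  decide +kernel

theorem sq_three_dvd_card : 3 ^ 2 ∣ Nat.card E₆.Group := by
  let cs := E₆.toCoxeterSystem
  let φ := cs.lift ⟨_, isLiftable_linePerm⟩
  have hφ (i : Fin 6) : φ (cs.simple i) = (linePerm_involutive i).toPerm :=
    cs.lift_apply_simple isLiftable_linePerm i
  refine sq_dvd_card_of_commute (a := cs.simple 0 * cs.simple 2) (b := cs.simple 4 * cs.simple 5)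
    ?_ ((by decide : E₆ 0 2 = 3) ▸ cs.simple_mul_simple_pow 0 2)
    ((by decide : E₆ 4 5 = 3) ▸ cs.simple_mul_simple_pow 4 5) ?_
  · have (i j : Fin 6) (h : E₆ i j = 2 := by decide) := cs.commute_simple_of_eq_two h
    exact ((this 0 4).mul_right (this 0 5)).mul_left ((this 2 4).mul_right (this 2 5))
  · intro k _ l _ h
    replace h := congrArg φ h
    simp only [map_mul, map_pow, map_one, hφ] at h
    revert k l h
    decide

end CoxeterMatrix.E₆

/-- In the Weyl group of type `E₆`, no centralizer `C_W(y)` contains a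
self-normalizing subgroup of order 3. -/
theorem weyl_E6_centralizer_no_order_three_carter
    (y : CoxeterMatrix.E₆.Group)
    (X : Subgroup ↥(Subgroup.centralizer ({y} : Set CoxeterMatrix.E₆.Group)))
    (hX : Nat.card X = 3) :
    Subgroup.normalizer (X : Set ↥(Subgroup.centralizer ({y} : Set CoxeterMatrix.E₆.Group))) ≠ X :=
  Subgroup.normalizer_ne_self_of_sq_dvd_card CoxeterMatrix.E₆.sq_three_dvd_card y X hX
end

section
/- Let p be an odd prime, n ≥ 1, m ≥ 1, and let k ≥ 1 be odd. Then the 2-adic valuation of the order of SL_n(F_{p^{mk}}) equals the 2-adic valuation of the order of SL_n(F_{p^m}). Consequently, under the group embedding SL_n(F_{p^m}) → SL_n(F_{p^{mk}}) induced by the field embedding F_{p^m} → F_{p^{mk}} (applied entrywise to matrices), every Sylow 2-subgroup of the image is a Sylow 2-subgroup of SL_n(F_{p^{mk}}). -/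
open Matrix

lemma aux_fact2_pow_sub_one {x k : ℕ} (hx : Odd x) (hk : Odd k) :
    (x ^ k - 1).factorization 2 = (x - 1).factorization 2 := by
  rcases Nat.lt_or_ge x 2 with h | h
  · interval_cases x
    · simp at hx
    · simp
  · set S := ∑ i ∈ Finset.range k, x ^ i with hSdef
    have hSodd : Odd S := by
      rw [Nat.odd_iff] at hx hk ⊢
      rw [hSdef, Finset.sum_nat_mod]
      have : ∀ i ∈ Finset.range k, x ^ i % 2 = 1 := fun i _ => by
        rw [Nat.pow_mod, hx, one_pow]
        rfl
      rw [Finset.sum_congr rfl this]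
      simpa using hk
    have hSne : S ≠ 0 := by
      intro h0; rw [h0] at hSodd; simp at hSodd
    have hmul : x ^ k - 1 = (x - 1) * S := by
      have hz : ((x : ℤ) - 1) * (S : ℤ) = (x : ℤ) ^ k - 1 := by
        rw [hSdef]
        push_cast
        rw [mul_comm]
        exact geom_sum_mul (x : ℤ) k
      have h1 : (1 : ℕ) ≤ x ^ k := Nat.one_le_pow _ _ (by omega)
      zify [h1, (by omega : (1:ℕ) ≤ x)]
      exact hz.symm
    rw [hmul, Nat.factorization_mul (by omega) hSne]
    have h0 : S.factorization 2 = 0 :=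
      Nat.factorization_eq_zero_of_not_dvd
        (by rw [Nat.two_dvd_ne_zero]; exact Nat.odd_iff.mp hSodd)
    simp [h0]

lemma aux_det_surjective {L : Type} [Field L] [DecidableEq L] {n : ℕ} (hn : 1 ≤ n) :
    Function.Surjective (Matrix.GeneralLinearGroup.det : GL (Fin n) L →* Lˣ) := by
  intro u
  have i0 : Fin n := ⟨0, hn⟩
  set A := Matrix.diagonal (Function.update (1 : Fin n → L) i0 (u : L)) with hA
  have hdet : A.det = (u : L) := by
    rw [hA, Matrix.det_diagonal, Finset.prod_update_of_mem (Finset.mem_univ i0)]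
    simp
  refine ⟨Matrix.GeneralLinearGroup.mkOfDetNeZero A (by rw [hdet]; exact u.ne_zero), ?_⟩
  ext
  simpa [Matrix.GeneralLinearGroup.mkOfDetNeZero, Matrix.GeneralLinearGroup.mk',
    Matrix.unitOfDetInvertible] using hdet

lemma aux_range_toGL {L : Type} [Field L] {n : Type} [DecidableEq n] [Fintype n] :
    (Matrix.SpecialLinearGroup.toGL (n := n) (R := L)).range
      = (Matrix.GeneralLinearGroup.det (n := n) (R := L)).ker := by
  ext g
  constructor
  · rintro ⟨s, rfl⟩
    exact Matrix.SpecialLinearGroup.coeToGL_det s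
  · intro hg
    have : (g : Matrix n n L).det = 1 := by
      have := congrArg Units.val hg
      simpa using this
    exact ⟨⟨(g : Matrix n n L), this⟩, Units.ext rfl⟩

lemma aux_card_GL (L : Type) [Field L] [Fintype L] {n : ℕ} (hn : 1 ≤ n) :
    Nat.card (GL (Fin n) L) =
      Nat.card Lˣ * Nat.card (Matrix.SpecialLinearGroup (Fin n) L) := by
  classical
  have hinj : Function.Injective (Matrix.SpecialLinearGroup.toGL (n := Fin n) (R := L)) := by
    intro a b hab
    exact Subtype.coe_injective (congrArg Units.val hab)
  have h1 : Nat.card (Matrix.SpecialLinearGroup (Fin n) L)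
      = Nat.card (Matrix.GeneralLinearGroup.det (n := Fin n) (R := L)).ker := by
    rw [← aux_range_toGL]
    exact Nat.card_congr (MonoidHom.ofInjective hinj).toEquiv
  rw [Subgroup.card_eq_card_quotient_mul_card_subgroup
    (Matrix.GeneralLinearGroup.det (n := Fin n) (R := L)).ker, h1,
    Nat.card_congr (QuotientGroup.quotientKerEquivOfSurjective _ (aux_det_surjective hn)).toEquiv]

lemma aux_fact2_card_GL (L : Type) [Field L] [Fintype L] (hodd : Odd (Fintype.card L))
    (n : ℕ) :
    (Nat.card (GL (Fin n) L)).factorization 2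
      = ∑ i : Fin n, ((Fintype.card L) ^ (n - (i : ℕ)) - 1).factorization 2 := by
  classical
  set q := Fintype.card L with hq
  have hq2 : 2 ≤ q := Fintype.one_lt_card
  have hterm : ∀ i : Fin n, q ^ n - q ^ (i : ℕ) = q ^ (i : ℕ) * (q ^ (n - (i : ℕ)) - 1) := by
    intro i
    rw [Nat.mul_sub, mul_one, ← pow_add, Nat.add_sub_cancel' i.2.le]
  have hne : ∀ i : Fin n, q ^ n - q ^ (i : ℕ) ≠ 0 := by
    intro i
    have : q ^ (i : ℕ) < q ^ n := Nat.pow_lt_pow_right (by omega) i.2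
    omega
  rw [Matrix.card_GL_field, Nat.factorization_prod (fun i _ => hne i)]
  rw [Finsupp.finset_sum_apply]
  refine Finset.sum_congr rfl fun i _ => ?_
  rw [hterm i, Nat.factorization_mul (by positivity) ?_]
  · have hpo : (q ^ (i : ℕ)).factorization 2 = 0 :=
      Nat.factorization_eq_zero_of_not_dvd
        (by rw [Nat.two_dvd_ne_zero]; exact Nat.odd_iff.mp (hodd.pow))
    simp only [Finsupp.coe_add, Pi.add_apply, hpo, zero_add]
  · have : q ≤ q ^ (n - (i : ℕ)) := Nat.le_self_pow (by omega) q
    omega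

/-- For odd `p` and odd `k`, `|SL_n(p^{mk})|` and `|SL_n(p^m)|` have the same 2-adic
valuation; consequently every Sylow 2-subgroup of the image of
`SL_n(F_{p^m}) → SL_n(F_{p^{mk}})` is a Sylow 2-subgroup of `SL_n(F_{p^{mk}})`. -/
theorem sl_subfield_sylow_two (p : ℕ) (hp : p.Prime) (hodd : Odd p)
    (n m k : ℕ) (hn : 1 ≤ n) (hm : 1 ≤ m) (hk : 1 ≤ k) (hkodd : Odd k)
    (F K : Type) [Field F] [Fintype F] [Field K] [Fintype K]
    (hF : Fintype.card F = p ^ m) (hK : Fintype.card K = p ^ (m * k))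
    (f : F →+* K) :
    (Nat.card (Matrix.SpecialLinearGroup (Fin n) K)).factorization 2 =
        (Nat.card (Matrix.SpecialLinearGroup (Fin n) F)).factorization 2 ∧
      ∀ P : Sylow 2 ↥(Matrix.SpecialLinearGroup.map (n := Fin n) f).range,
        ∃ Q : Sylow 2 (Matrix.SpecialLinearGroup (Fin n) K),
          (P : Subgroup _).map (Matrix.SpecialLinearGroup.map (n := Fin n) f).range.subtype
            = ↑Q := by
  classical
  haveI : Fact (Nat.Prime 2) := ⟨Nat.prime_two⟩
  have hqodd : Odd (Fintype.card F) := by rw [hF]; exact hodd.pow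
  have hQodd : Odd (Fintype.card K) := by rw [hK]; exact hodd.pow
  have hQ : Fintype.card K = (Fintype.card F) ^ k := by rw [hF, hK, pow_mul]
  -- GL valuations agree
  have hGL : (Nat.card (GL (Fin n) K)).factorization 2
      = (Nat.card (GL (Fin n) F)).factorization 2 := by
    rw [aux_fact2_card_GL K hQodd n, aux_fact2_card_GL F hqodd n]
    refine Finset.sum_congr rfl fun i _ => ?_
    rw [hQ, ← pow_mul, mul_comm k (n - (i : ℕ)), pow_mul]
    exact aux_fact2_pow_sub_one (hqodd.pow) hkodd
  -- units valuations agree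
  have hU : (Nat.card Kˣ).factorization 2 = (Nat.card Fˣ).factorization 2 := by
    rw [Nat.card_eq_fintype_card, Nat.card_eq_fintype_card, Fintype.card_units,
      Fintype.card_units, hQ]
    exact aux_fact2_pow_sub_one hqodd hkodd
  -- main valuation equality
  have hmain : (Nat.card (Matrix.SpecialLinearGroup (Fin n) K)).factorization 2 =
      (Nat.card (Matrix.SpecialLinearGroup (Fin n) F)).factorization 2 := by
    have hK2 := aux_card_GL K hn
    have hF2 := aux_card_GL F hn
    have e1 : (Nat.card (GL (Fin n) K)).factorization 2
        = (Nat.card Kˣ).factorization 2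
          + (Nat.card (Matrix.SpecialLinearGroup (Fin n) K)).factorization 2 := by
      rw [hK2, Nat.factorization_mul Nat.card_pos.ne' Nat.card_pos.ne']
      simp
    have e2 : (Nat.card (GL (Fin n) F)).factorization 2
        = (Nat.card Fˣ).factorization 2
          + (Nat.card (Matrix.SpecialLinearGroup (Fin n) F)).factorization 2 := by
      rw [hF2, Nat.factorization_mul Nat.card_pos.ne' Nat.card_pos.ne']
      simp
    omega
  refine ⟨hmain, fun P => ?_⟩
  -- injectivity of the induced map
  have hinj : Function.Injective (Matrix.SpecialLinearGroup.map (n := Fin n) f) := by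
    intro a b hab
    apply Subtype.coe_injective
    have h1 := congrArg Subtype.val hab
    simp only [Matrix.SpecialLinearGroup.map] at h1
    ext i j
    exact f.injective (congrFun (congrFun h1 i) j)
  have hcardH : Nat.card (Matrix.SpecialLinearGroup.map (n := Fin n) f).range = Nat.card (Matrix.SpecialLinearGroup (Fin n) F) :=
    (Nat.card_congr (MonoidHom.ofInjective hinj).toEquiv).symm
  have hcardP : Nat.card ((P : Subgroup _).map
        (Matrix.SpecialLinearGroup.map (n := Fin n) f).range.subtype)
      = 2 ^ (Nat.card (Matrix.SpecialLinearGroup (Fin n) K)).factorization 2 := by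
    rw [← Nat.card_congr (Subgroup.equivMapOfInjective (P : Subgroup _)
      (Matrix.SpecialLinearGroup.map (n := Fin n) f).range.subtype
      (Subgroup.subtype_injective _)).toEquiv]
    rw [P.card_eq_multiplicity, hcardH, hmain]
  exact ⟨Sylow.ofCard _ hcardP, (Sylow.coe_ofCard _ hcardP).symm⟩
end
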